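/- The monoid IC_n is ample: for every α ∈ IC_n and every idempotent ε ∈ IC_n, one has εα = α·ε_{im(εα)} and αε = ε_{dom(αε)}·α, where for A ⊆ [n], ε_A denotes the partial identity with domain A (which is an idempotent of IC_n and the unique idempotent L*-related, respectively R*-related, to a given element with image, respectively domain, equal to A). -/

import Mathlib

/-
Partial injections form an inverse monoid in which `f * f.symm = ε_{dom f}` and
`f.symm * f = ε_{im f}`; multiplying by `f.symm` cancels `f` up to these partial identities, so
`α L* ε_{im α}` and `α R* ε_{dom α}` hold even with all partial injections as test elements.
Idempotent partial injections are partial identities and therefore commute, which forces two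
`L*`-related (or `R*`-related) idempotents to be equal. The ample identities are checked
pointwise, using only that `α` is injective.
-/

open scoped Classical

namespace ICCatalan

/-- Partial injective transformations on `Fin n` (representing the chain `[n] = {1,…,n}`). -/
abbrev PT (n : ℕ) := Fin n ≃. Fin n

/-- Composition (left-to-right, `x(αβ) = (xα)β`) makes `PT n` a monoid. -/
noncomputable instance instMonoidPT (n : ℕ) : Monoid (PT n) where
  mul f g := f.trans g
  one := PEquiv.refl (Fin n)
  mul_assoc := PEquiv.trans_assoc
  one_mul := PEquiv.refl_trans
  mul_one := PEquiv.trans_refl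

lemma mul_def {n : ℕ} (f g : PT n) : f * g = f.trans g := rfl

/-- The domain of a partial transformation. -/
def pdom {n : ℕ} (f : PT n) : Set (Fin n) := {x | ∃ y, f x = some y}

/-- The image of a partial transformation. -/
def pim {n : ℕ} (f : PT n) : Set (Fin n) := {y | ∃ x, f x = some y}

/-- The height `|im f|` of a partial transformation. -/
noncomputable def height {n : ℕ} (f : PT n) : ℕ := (pim f).ncard

/-- `f` is order-decreasing: `xf ≤ x` on the domain. -/
def IsDecr {n : ℕ} (f : PT n) : Prop := ∀ x y : Fin n, f x = some y → y ≤ x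

/-- `f` is isotone: `x ≤ y` implies `xf ≤ yf` on the domain. -/
def IsIso {n : ℕ} (f : PT n) : Prop :=
  ∀ x₁ x₂ y₁ y₂ : Fin n, f x₁ = some y₁ → f x₂ = some y₂ → x₁ ≤ x₂ → y₁ ≤ y₂

/-- The injective partial Catalan monoid `IC_n`: all isotone order-decreasing
partial injective transformations of `[n]`. -/
def IC (n : ℕ) : Set (PT n) := {f | IsIso f ∧ IsDecr f}

/-- `Q'_n = {α ∈ IC_n : 1 ∉ dom α}` (the least element of `Fin n` plays the role of `1 ∈ [n]`). -/
def Qp (n : ℕ) : Set (PT n) := {f | f ∈ IC n ∧ ∀ x : Fin n, (x : ℕ) = 0 → f x = none}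

/-- `S¹ : S` with an identity adjoined (realized inside `PT n`). -/
def SOne {n : ℕ} (S : Set (PT n)) : Set (PT n) := S ∪ {1}

/-- The starred Green relation `L*` of the subsemigroup `S`. -/
def LStar {n : ℕ} (S : Set (PT n)) (a b : PT n) : Prop :=
  ∀ x ∈ SOne S, ∀ y ∈ SOne S, (a * x = a * y ↔ b * x = b * y)

/-- The starred Green relation `R*` of the subsemigroup `S`. -/
def RStar {n : ℕ} (S : Set (PT n)) (a b : PT n) : Prop :=
  ∀ x ∈ SOne S, ∀ y ∈ SOne S, (x * a = y * a ↔ x * b = y * b)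

/-- The starred Green relation `H* = L* ∩ R*`. -/
def HStar {n : ℕ} (S : Set (PT n)) (a b : PT n) : Prop :=
  LStar S a b ∧ RStar S a b

/-- The partial identity on a subset `A` of `[n]`. -/
noncomputable def pid {n : ℕ} (A : Set (Fin n)) : PT n := PEquiv.ofSet A

/-- An essential element: exactly one point `y` of the domain is moved, and `yf = y - 1`. -/
def IsEssential {n : ℕ} (f : PT n) : Prop :=
  ∃ y z : Fin n, f y = some z ∧ (z : ℕ) + 1 = (y : ℕ) ∧
    ∀ x w : Fin n, f x = some w → w ≠ x → x = y

/-- The shift of `f`: the number of non-fixed points of its domain. -/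
noncomputable def shift {n : ℕ} (f : PT n) : ℕ := {x : Fin n | ∃ w, f x = some w ∧ w ≠ x}.ncard


section PartialIdentities

variable {n : ℕ}

lemma ext_of_eq_some {f g : PT n} (h : ∀ x y, f x = some y ↔ g x = some y) : f = g :=
  PEquiv.ext fun x => Option.ext (h x)

lemma mul_apply_eq_some {f g : PT n} {x z : Fin n} :
    (f * g) x = some z ↔ ∃ y, f x = some y ∧ g y = some z :=
  PEquiv.trans_eq_some f g x z

lemma mem_pdom {f : PT n} {x : Fin n} : x ∈ pdom f ↔ ∃ y, f x = some y := Iff.rfl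

lemma mem_pim {f : PT n} {y : Fin n} : y ∈ pim f ↔ ∃ x, f x = some y := Iff.rfl

@[simp]
lemma pid_apply_eq_some {A : Set (Fin n)} {x y : Fin n} : pid A x = some y ↔ y = x ∧ y ∈ A :=
  PEquiv.ofSet_eq_some_iff

lemma pid_mem_IC (A : Set (Fin n)) : pid A ∈ IC n := by
  refine ⟨fun x₁ x₂ y₁ y₂ h₁ h₂ hle => ?_, fun x y h => ?_⟩
  · rw [(pid_apply_eq_some.1 h₁).1, (pid_apply_eq_some.1 h₂).1]
    exact hle
  · rw [(pid_apply_eq_some.1 h).1]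

lemma pid_mul_pid (A B : Set (Fin n)) : pid A * pid B = pid (A ∩ B) :=
  ext_of_eq_some fun x z => by simp only [mul_apply_eq_some, pid_apply_eq_some]; aesop

lemma pid_mul_self (A : Set (Fin n)) : pid A * pid A = pid A := by
  rw [pid_mul_pid, Set.inter_self]

lemma pid_pdom_mul (f : PT n) : pid (pdom f) * f = f :=
  ext_of_eq_some fun x z => by simpa [mul_apply_eq_some, mem_pdom] using fun h => ⟨z, h⟩

lemma mul_pid_pim (f : PT n) : f * pid (pim f) = f :=
  ext_of_eq_some fun x z => by simpa [mul_apply_eq_some, mem_pim] using fun h => ⟨x, h⟩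

lemma mul_symm_self (f : PT n) : f * f.symm = pid (pdom f) := by
  rw [mul_def, PEquiv.self_trans_symm]
  congr
  ext x
  simp [Option.isSome_iff_exists]

lemma symm_mul_self (f : PT n) : f.symm * f = pid (pim f) := by
  rw [mul_def, PEquiv.symm_trans_self]
  congr
  ext x
  simp [Option.isSome_iff_exists, PEquiv.eq_some_iff]

end PartialIdentities

section Idempotents

variable {n : ℕ}

lemma eq_pid_pdom_of_mul_self {e : PT n} (he : e * e = e) : e = pid (pdom e) := by
  have fixes : ∀ {x y}, e x = some y → y = x := fun {x y} hxy => by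
    obtain ⟨w, hxw, hwy⟩ := mul_apply_eq_some.1 (by rwa [he] : (e * e) x = some y)
    obtain rfl : w = y := Option.some_inj.1 (hxw.symm.trans hxy)
    exact e.inj hwy hxy
  refine ext_of_eq_some fun x y => ⟨fun hxy => ?_, ?_⟩
  · obtain rfl := fixes hxy
    exact pid_apply_eq_some.2 ⟨rfl, y, hxy⟩
  · intro h
    obtain ⟨rfl, z, hyz⟩ := pid_apply_eq_some.1 h
    rwa [fixes hyz] at hyz

lemma commute_of_mul_self {e f : PT n} (he : e * e = e) (hf : f * f = f) : e * f = f * e := by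
  rw [eq_pid_pdom_of_mul_self he, eq_pid_pdom_of_mul_self hf, pid_mul_pid, pid_mul_pid,
    Set.inter_comm]

end Idempotents

section StarredGreen

variable {n : ℕ} {S : Set (PT n)} {a b c : PT n}

lemma one_mem_SOne : (1 : PT n) ∈ SOne S := Set.mem_union_right S rfl

lemma mem_SOne_of_mem (h : a ∈ S) : a ∈ SOne S := Set.mem_union_left _ h

lemma LStar.symm (h : LStar S a b) : LStar S b a := fun x hx y hy => (h x hx y hy).symm

lemma LStar.trans (h₁ : LStar S a b) (h₂ : LStar S b c) : LStar S a c :=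
  fun x hx y hy => (h₁ x hx y hy).trans (h₂ x hx y hy)

lemma RStar.symm (h : RStar S a b) : RStar S b a := fun x hx y hy => (h x hx y hy).symm

lemma RStar.trans (h₁ : RStar S a b) (h₂ : RStar S b c) : RStar S a c :=
  fun x hx y hy => (h₁ x hx y hy).trans (h₂ x hx y hy)

lemma mul_eq_mul_iff_pid_pim_mul (f x y : PT n) :
    f * x = f * y ↔ pid (pim f) * x = pid (pim f) * y := by
  constructor <;> intro h
  · rw [← symm_mul_self, mul_assoc, mul_assoc, h]
  · rw [← mul_pid_pim f, mul_assoc, mul_assoc, h]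

lemma mul_eq_mul_iff_mul_pid_pdom (f x y : PT n) :
    x * f = y * f ↔ x * pid (pdom f) = y * pid (pdom f) := by
  constructor <;> intro h
  · rw [← mul_symm_self, ← mul_assoc, ← mul_assoc, h]
  · rw [← pid_pdom_mul f, ← mul_assoc, ← mul_assoc, h]

lemma lStar_pid_pim (S : Set (PT n)) (a : PT n) : LStar S a (pid (pim a)) :=
  fun x _ y _ => mul_eq_mul_iff_pid_pim_mul a x y

lemma rStar_pid_pdom (S : Set (PT n)) (a : PT n) : RStar S a (pid (pdom a)) :=
  fun x _ y _ => mul_eq_mul_iff_mul_pid_pdom a x y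

lemma eq_of_lStar_of_mul_self {e f : PT n} (he : e ∈ S) (hf : f ∈ S) (hee : e * e = e)
    (hff : f * f = f) (h : LStar S e f) : e = f := by
  have hef : e * f = e := by
    simpa using (h f (mem_SOne_of_mem hf) 1 one_mem_SOne).2 (by rw [hff, mul_one])
  have hfe : f * e = f := by
    simpa using (h e (mem_SOne_of_mem he) 1 one_mem_SOne).1 (by rw [hee, mul_one])
  rw [← hef, commute_of_mul_self hee hff, hfe]

lemma eq_of_rStar_of_mul_self {e f : PT n} (he : e ∈ S) (hf : f ∈ S) (hee : e * e = e)
    (hff : f * f = f) (h : RStar S e f) : e = f := by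
  have hfe : f * e = e := by
    simpa using (h f (mem_SOne_of_mem hf) 1 one_mem_SOne).2 (by rw [hff, one_mul])
  have hef : e * f = f := by
    simpa using (h e (mem_SOne_of_mem he) 1 one_mem_SOne).1 (by rw [hee, one_mul])
  rw [← hfe, ← commute_of_mul_self hee hff, hef]

end StarredGreen

section Ample

variable {n : ℕ}

lemma pid_mul_eq_mul_pid_pim (A : Set (Fin n)) (a : PT n) :
    pid A * a = a * pid (pim (pid A * a)) := by
  refine ext_of_eq_some fun x z => ?_
  simp only [mul_apply_eq_some, pid_apply_eq_some, mem_pim]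
  constructor
  · rintro ⟨y, ⟨rfl, hy⟩, hyz⟩
    exact ⟨z, hyz, rfl, y, y, ⟨rfl, hy⟩, hyz⟩
  · rintro ⟨_, hxz, rfl, w, _, ⟨rfl, hw⟩, hwz⟩
    exact ⟨x, ⟨rfl, a.inj hwz hxz ▸ hw⟩, hxz⟩

lemma mul_pid_eq_pid_pdom_mul (A : Set (Fin n)) (a : PT n) :
    a * pid A = pid (pdom (a * pid A)) * a := by
  refine ext_of_eq_some fun x z => ?_
  simp only [mul_apply_eq_some, pid_apply_eq_some, mem_pdom]
  constructor
  · rintro ⟨_, hxz, rfl, hz⟩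
    exact ⟨x, ⟨rfl, z, z, hxz, rfl, hz⟩, hxz⟩
  · rintro ⟨_, ⟨rfl, w, y, hxy, rfl, hy⟩, hxz⟩
    exact ⟨z, hxz, rfl, Option.some_inj.1 (hxy.symm.trans hxz) ▸ hy⟩

end Ample

theorem stmt6_general (n : ℕ) :
    (∀ A : Set (Fin n), pid A ∈ IC n ∧ pid A * pid A = pid A) ∧
    (∀ α ∈ IC n,
      (LStar (IC n) α (pid (pim α)) ∧
        ∀ e ∈ IC n, e * e = e → LStar (IC n) α e → e = pid (pim α)) ∧
      (RStar (IC n) α (pid (pdom α)) ∧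
        ∀ e ∈ IC n, e * e = e → RStar (IC n) α e → e = pid (pdom α))) ∧
    (∀ α ∈ IC n, ∀ ε ∈ IC n, ε * ε = ε →
      ε * α = α * pid (pim (ε * α)) ∧ α * ε = pid (pdom (α * ε)) * α) := by
  refine ⟨fun A => ⟨pid_mem_IC A, pid_mul_self A⟩,
    fun α _ => ⟨⟨lStar_pid_pim _ α, ?_⟩, ⟨rStar_pid_pdom _ α, ?_⟩⟩, ?_⟩
  · intro e he hee hL
    exact eq_of_lStar_of_mul_self he (pid_mem_IC _) hee (pid_mul_self _)
      (hL.symm.trans (lStar_pid_pim _ α))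
  · intro e he hee hR
    exact eq_of_rStar_of_mul_self he (pid_mem_IC _) hee (pid_mul_self _)
      (hR.symm.trans (rStar_pid_pdom _ α))
  · intro α _ ε _ hεε
    rw [eq_pid_pdom_of_mul_self hεε]
    exact ⟨pid_mul_eq_mul_pid_pim _ α, mul_pid_eq_pid_pdom_mul _ α⟩

/-- `IC_n` is ample.  For every `A ⊆ [n]` the partial identity `ε_A` is an
idempotent of `IC_n`; `ε_{im α}` (resp. `ε_{dom α}`) is the unique idempotent `L*`-related
(resp. `R*`-related) to `α`; and for all `α ∈ IC_n` and idempotents `ε ∈ IC_n`,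
`εα = α·ε_{im(εα)}` and `αε = ε_{dom(αε)}·α`. -/
theorem stmt6 (n : ℕ) (hn : 0 < n) :
    (∀ A : Set (Fin n), pid A ∈ IC n ∧ pid A * pid A = pid A) ∧
    (∀ α ∈ IC n,
      (LStar (IC n) α (pid (pim α)) ∧
        ∀ e ∈ IC n, e * e = e → LStar (IC n) α e → e = pid (pim α)) ∧
      (RStar (IC n) α (pid (pdom α)) ∧
        ∀ e ∈ IC n, e * e = e → RStar (IC n) α e → e = pid (pdom α))) ∧
    (∀ α ∈ IC n, ∀ ε ∈ IC n, ε * ε = ε →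
      ε * α = α * pid (pim (ε * α)) ∧ α * ε = pid (pdom (α * ε)) * α) :=
  stmt6_general n

end ICCatalan
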